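/- If R ⊆ S are two finite-dimensional algebras over an infinite field F having the same degree (degree of the minimal CH-norm), then the minimal CH-norm of S restricted to R equals the minimal CH-norm of R. -/

import Mathlib

/-!
The generic element of `S` is integral over the polynomial ring `F[x_κ]`, which is integrally
closed, so its minimal polynomial over the rational function field has coefficients in `F[x_κ]`.
Substituting for the variables `x_κ` the coordinates of `φ` applied to the generic element of `R`
(a linear change of variables in `x_ι`) yields a monic polynomial that kills the generic element
of `R`; having the same degree as its minimal polynomial, it is that minimal polynomial. Comparing
constant coefficients, the minimal CH-norm of `R` is the minimal CH-norm of `S` pulled back along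
this substitution, that is, along `φ`.
-/

open TensorProduct

variable {F R ι : Type*}

/-- The polynomial function on `R` attached to a polynomial in the coordinates
along the basis `b`. -/
noncomputable def polyFun [Field F] [Ring R] [Algebra F R] [Fintype ι]
    (b : Module.Basis ι F R) (p : MvPolynomial ι F) : R → F :=
  fun r => MvPolynomial.eval (fun i => b.repr r i) p

/-- The abstract characteristic polynomial `χ_a(t) = N(t·1 - a)` of an element `a`,
for the polynomial map attached to `p`. -/
noncomputable def charPolyOf [Field F] [Ring R] [Algebra F R] [Fintype ι]
    (b : Module.Basis ι F R) (p : MvPolynomial ι F) (a : R) : Polynomial F :=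
  MvPolynomial.aeval
    (fun i => Polynomial.C (b.repr 1 i) * Polynomial.X - Polynomial.C (b.repr a i)) p

/-- `p` defines a Cayley–Hamilton norm of degree `n` on `R` (w.r.t. the basis `b`):
homogeneous of degree `n`, multiplicative, and every element satisfies its abstract
characteristic polynomial. -/
structure IsCHNorm [Field F] [Ring R] [Algebra F R] [Fintype ι]
    (b : Module.Basis ι F R) (n : ℕ) (p : MvPolynomial ι F) : Prop where
  homog : ∀ (α : F) (r : R), polyFun b p (α • r) = α ^ n * polyFun b p r
  mult : ∀ x y : R, polyFun b p (x * y) = polyFun b p x * polyFun b p y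
  ch : ∀ a : R, Polynomial.aeval a (charPolyOf b p a) = 0

/-- The generic element `x = Σ xᵢ aᵢ` of `R ⊗ K`, `K` the rational function field. -/
noncomputable def genElt [Field F] [Ring R] [Algebra F R] [Fintype ι] (b : Module.Basis ι F R) :
    FractionRing (MvPolynomial ι F) ⊗[F] R :=
  ∑ i, algebraMap (MvPolynomial ι F) (FractionRing (MvPolynomial ι F)) (MvPolynomial.X i)
    ⊗ₜ[F] b i

open Polynomial

theorem Algebra.TensorProduct.map_injective_of_field {K S A B C D : Type*} [Field K]
    [CommSemiring S] [Algebra K S] [Ring A] [Algebra K A] [Algebra S A] [IsScalarTower K S A]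
    [Ring B] [Algebra K B] [Ring C] [Algebra K C] [Algebra S C] [IsScalarTower K S C]
    [Ring D] [Algebra K D] (f : A →ₐ[S] C) (g : B →ₐ[K] D)
    (hf : Function.Injective f) (hg : Function.Injective g) :
    Function.Injective (Algebra.TensorProduct.map f g) :=
  TensorProduct.map_injective_of_flat_flat (f.restrictScalars K).toLinearMap g.toLinearMap hf hg

theorem exists_monic_map_eq_minpoly {A K L : Type*} [CommRing A] [IsDomain A]
    [IsIntegrallyClosed A] [Field K] [Algebra A K] [IsFractionRing A K] [Ring L] [Algebra K L]
    [Algebra A L] [IsScalarTower A K L] {x : L} (hx : IsIntegral A x) :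
    ∃ M : A[X], M.Monic ∧ M.map (algebraMap A K) = minpoly K x := by
  have hmonic : (minpoly K x).Monic := minpoly.monic hx.tower_top
  obtain ⟨f, hf, hfx⟩ := hx
  obtain ⟨M, hM⟩ := IsIntegrallyClosed.eq_map_mul_C_of_dvd K hf
    (minpoly.dvd K x (by rw [aeval_map_algebraMap]; exact hfx))
  rw [hmonic.leadingCoeff, C_1, mul_one] at hM
  exact ⟨M, monic_of_injective (IsFractionRing.injective A K) (hM ▸ hmonic), hM⟩

theorem minpoly.eq_of_monic_of_natDegree_eq {K L : Type*} [Field K] [Ring L] [Algebra K L]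
    {x : L} {q : K[X]} (hq : q.Monic) (hqx : Polynomial.aeval x q = 0)
    (hdeg : q.natDegree = (minpoly K x).natDegree) : q = minpoly K x := by
  have hx : IsIntegral K x := ⟨q, hq, hqx⟩
  refine minpoly.unique_of_degree_le_degree_minpoly K x hq hqx ?_
  rw [degree_eq_natDegree hq.ne_zero, degree_eq_natDegree (minpoly.ne_zero hx), hdeg]

section GenericElement

variable [Field F] [Ring R] [Algebra F R]

variable (F R ι) in
noncomputable def toFracTensor :
    MvPolynomial ι F ⊗[F] R →ₐ[MvPolynomial ι F] FractionRing (MvPolynomial ι F) ⊗[F] R :=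
  Algebra.TensorProduct.map (Algebra.ofId _ _) (AlgHom.id F R)

theorem toFracTensor_injective : Function.Injective (toFracTensor F R ι) :=
  Algebra.TensorProduct.map_injective_of_field _ _
    (IsFractionRing.injective (MvPolynomial ι F) (FractionRing (MvPolynomial ι F)))
    fun _ _ h => h

variable [Fintype ι] (b : Module.Basis ι F R)

noncomputable def polyGenElt : MvPolynomial ι F ⊗[F] R :=
  ∑ i, MvPolynomial.X i ⊗ₜ[F] b i

theorem toFracTensor_polyGenElt : toFracTensor F R ι (polyGenElt b) = genElt b := by
  simp only [toFracTensor, polyGenElt, genElt, map_sum, Algebra.TensorProduct.map_tmul,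
    Algebra.ofId_apply, AlgHom.id_apply]

theorem isIntegral_polyGenElt : IsIntegral (MvPolynomial ι F) (polyGenElt b) :=
  have : Module.Finite F R := Module.Finite.of_basis b
  IsIntegral.of_finite _ _

theorem isIntegral_genElt : IsIntegral (MvPolynomial ι F) (genElt b) :=
  toFracTensor_polyGenElt b ▸ (isIntegral_polyGenElt b).map (toFracTensor F R ι)

theorem aeval_polyGenElt_eq_zero_iff (p : (MvPolynomial ι F)[X]) :
    aeval (polyGenElt b) p = 0 ↔ aeval (genElt b) p = 0 := by
  rw [← toFracTensor_polyGenElt, aeval_algHom_apply,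
    toFracTensor_injective.eq_iff' (map_zero _)]

end GenericElement

section CoordSubst

variable {S κ : Type*} [Field F] [Ring R] [Algebra F R] [Ring S] [Algebra F S]
  [Fintype ι] [Fintype κ] (bR : Module.Basis ι F R) (bS : Module.Basis κ F S)

noncomputable def coordSubst (f : R →ₗ[F] S) : MvPolynomial κ F →ₐ[F] MvPolynomial ι F :=
  MvPolynomial.aeval fun j => ∑ i, MvPolynomial.C (bS.repr (f (bR i)) j) * MvPolynomial.X i

theorem polyFun_coordSubst (f : R →ₗ[F] S) (p : MvPolynomial κ F) (r : R) :
    polyFun bR (coordSubst bR bS f p) r = polyFun bS p (f r) := by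
  have hcoord : ∀ j, bS.repr (f r) j = ∑ i, bR.repr r i * bS.repr (f (bR i)) j := fun j => by
    conv_lhs => rw [← bR.sum_repr r, map_sum, map_sum]
    simp only [map_smul, Finsupp.coe_finsetSum, Finset.sum_apply, Finsupp.smul_apply, smul_eq_mul]
  rw [polyFun, polyFun, coordSubst, MvPolynomial.aeval_eq_bind₁, MvPolynomial.eval,
    MvPolynomial.eval₂Hom_bind₁]
  congr 2 with j
  simp [hcoord, mul_comm]

theorem map_coordSubst_polyGenElt (φ : R →ₐ[F] S) :
    Algebra.TensorProduct.map (coordSubst bR bS φ.toLinearMap) (AlgHom.id F S) (polyGenElt bS) =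
      Algebra.TensorProduct.map (AlgHom.id (MvPolynomial ι F) (MvPolynomial ι F)) φ
        (polyGenElt bR) := by
  simp only [polyGenElt, coordSubst, map_sum, Algebra.TensorProduct.map_tmul, AlgHom.id_apply,
    MvPolynomial.aeval_X, TensorProduct.sum_tmul, MvPolynomial.C_mul', TensorProduct.smul_tmul]
  rw [Finset.sum_comm]
  refine Finset.sum_congr rfl fun i _ => ?_
  conv_rhs => rw [← bS.sum_repr (φ (bR i)), TensorProduct.tmul_sum]
  rfl

theorem aeval_genElt_map_coordSubst (φ : R →ₐ[F] S) (hφ : Function.Injective φ)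
    {M : (MvPolynomial κ F)[X]} (hM : aeval (genElt bS) M = 0) :
    aeval (genElt bR) (M.map (coordSubst bR bS φ.toLinearMap).toRingHom) = 0 := by
  rw [← aeval_polyGenElt_eq_zero_iff] at hM ⊢
  set ε := Algebra.TensorProduct.map (coordSubst bR bS φ.toLinearMap) (AlgHom.id F S)
  have hε : (algebraMap (MvPolynomial ι F) (MvPolynomial ι F ⊗[F] S)).comp
      (coordSubst bR bS φ.toLinearMap).toRingHom =
      (ε : MvPolynomial κ F ⊗[F] S →+* MvPolynomial ι F ⊗[F] S).comp
        (algebraMap (MvPolynomial κ F) (MvPolynomial κ F ⊗[F] S)) := by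
    ext a <;> simp [ε, Algebra.TensorProduct.algebraMap_apply]
  apply Algebra.TensorProduct.map_injective_of_field
    (AlgHom.id (MvPolynomial ι F) (MvPolynomial ι F)) φ (fun _ _ h => h) hφ
  rw [map_zero, ← aeval_algHom_apply, ← map_coordSubst_polyGenElt bR bS φ]
  exact (map_aeval_eq_aeval_map hε M _).symm.trans (by rw [hM, map_zero])

theorem map_coordSubst_eq_minpoly_genElt (φ : R →ₐ[F] S) (hφ : Function.Injective φ)
    {M : (MvPolynomial κ F)[X]} (hM : M.Monic)
    (hMS : M.map (algebraMap _ (FractionRing (MvPolynomial κ F))) =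
      minpoly (FractionRing (MvPolynomial κ F)) (genElt bS))
    (hdeg : (minpoly (FractionRing (MvPolynomial ι F)) (genElt bR)).natDegree =
      (minpoly (FractionRing (MvPolynomial κ F)) (genElt bS)).natDegree) :
    (M.map (coordSubst bR bS φ.toLinearMap).toRingHom).map
        (algebraMap _ (FractionRing (MvPolynomial ι F))) =
      minpoly (FractionRing (MvPolynomial ι F)) (genElt bR) := by
  refine minpoly.eq_of_monic_of_natDegree_eq ((hM.map _).map _) ?_ ?_
  · rw [aeval_map_algebraMap]
    refine aeval_genElt_map_coordSubst bR bS φ hφ ?_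
    rw [← aeval_map_algebraMap (FractionRing (MvPolynomial κ F)), hMS, minpoly.aeval]
  · rw [(hM.map _).natDegree_map, hM.natDegree_map, hdeg, ← hMS, hM.natDegree_map]

end CoordSubst

/-- The minimal CH-norms enter as `(-1)^k P(0)`, `P` the minimal polynomial of the respective
generic element. -/
theorem stmt10_general {S κ : Type*} [Field F]
    [Ring R] [Algebra F R] [Fintype ι] (bR : Module.Basis ι F R)
    [Ring S] [Algebra F S] [Fintype κ] (bS : Module.Basis κ F S)
    (φ : R →ₐ[F] S) (hφ : Function.Injective φ)
    (hdeg : (minpoly (FractionRing (MvPolynomial ι F)) (genElt bR)).natDegree =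
      (minpoly (FractionRing (MvPolynomial κ F)) (genElt bS)).natDegree)
    (pR : MvPolynomial ι F)
    (hpR : algebraMap (MvPolynomial ι F) (FractionRing (MvPolynomial ι F)) pR =
      (-1) ^ (minpoly (FractionRing (MvPolynomial ι F)) (genElt bR)).natDegree *
        (minpoly (FractionRing (MvPolynomial ι F)) (genElt bR)).coeff 0)
    (pS : MvPolynomial κ F)
    (hpS : algebraMap (MvPolynomial κ F) (FractionRing (MvPolynomial κ F)) pS =
      (-1) ^ (minpoly (FractionRing (MvPolynomial κ F)) (genElt bS)).natDegree *
        (minpoly (FractionRing (MvPolynomial κ F)) (genElt bS)).coeff 0) :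
    ∀ r : R, polyFun bS pS (φ r) = polyFun bR pR r := by
  obtain ⟨M, hM, hMS⟩ :=
    exists_monic_map_eq_minpoly (K := FractionRing (MvPolynomial κ F)) (isIntegral_genElt bS)
  have hMR := map_coordSubst_eq_minpoly_genElt bR bS φ hφ hM hMS hdeg
  have hpS_eq : pS = (-1) ^ M.natDegree * M.coeff 0 := by
    apply IsFractionRing.injective (MvPolynomial κ F) (FractionRing (MvPolynomial κ F))
    rw [hpS, ← hMS, coeff_map, hM.natDegree_map]
    simp
  have hpR_eq : pR = coordSubst bR bS φ.toLinearMap pS := by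
    apply IsFractionRing.injective (MvPolynomial ι F) (FractionRing (MvPolynomial ι F))
    rw [hpR, ← hMR, coeff_map, coeff_map, (hM.map _).natDegree_map, hM.natDegree_map, hpS_eq]
    simp
  intro r
  rw [hpR_eq, polyFun_coordSubst]
  rfl

/-- If `R ⊆ S` are finite-dimensional algebras of the same degree, the minimal CH-norm of
`S` restricted to `R` is the minimal CH-norm of `R`. The minimal CH-norms are written as
`(-1)^k P(0)` for `P` the minimal polynomial of the respective generic elements. -/
theorem stmt10 {S κ : Type*} [Field F] [Infinite F]
    [Ring R] [Algebra F R] [FiniteDimensional F R] [Fintype ι] (bR : Module.Basis ι F R)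
    [Ring S] [Algebra F S] [FiniteDimensional F S] [Fintype κ] (bS : Module.Basis κ F S)
    (φ : R →ₐ[F] S) (hφ : Function.Injective φ)
    (hdeg : (minpoly (FractionRing (MvPolynomial ι F)) (genElt bR)).natDegree =
      (minpoly (FractionRing (MvPolynomial κ F)) (genElt bS)).natDegree)
    (pR : MvPolynomial ι F)
    (hpR : algebraMap (MvPolynomial ι F) (FractionRing (MvPolynomial ι F)) pR =
      (-1) ^ (minpoly (FractionRing (MvPolynomial ι F)) (genElt bR)).natDegree *
        (minpoly (FractionRing (MvPolynomial ι F)) (genElt bR)).coeff 0)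
    (pS : MvPolynomial κ F)
    (hpS : algebraMap (MvPolynomial κ F) (FractionRing (MvPolynomial κ F)) pS =
      (-1) ^ (minpoly (FractionRing (MvPolynomial κ F)) (genElt bS)).natDegree *
        (minpoly (FractionRing (MvPolynomial κ F)) (genElt bS)).coeff 0) :
    ∀ r : R, polyFun bS pS (φ r) = polyFun bR pR r :=
  stmt10_general bR bS φ hφ hdeg pR hpR pS hpS
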